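/- Let j ≥ 1 be an integer. Then the Laurent polynomial N(j) has highest exponent h(N(j)) = 3j+6, where the coefficient of A^{3j+6} is (−1)^{j+1}, and lowest exponent ℓ(N(j)) = −j−6, where the coefficient of A^{−j−6} is 1. -/

import Mathlib

open LaurentPolynomial Finset

/-- The coefficient of `A^k` in the Laurent polynomial `y ∈ ℤ[A,A⁻¹]`. -/
noncomputable def coeffA (y : LaurentPolynomial ℤ) (k : ℤ) : ℤ := y.coeff k

/-- `y` has highest exponent `d`, with coefficient `c` (nonzero) on `A^d`. -/
def HiCoeff (y : LaurentPolynomial ℤ) (d c : ℤ) : Prop :=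
  coeffA y d = c ∧ c ≠ 0 ∧ ∀ k, d < k → coeffA y k = 0

/-- `y` has lowest exponent `d`, with coefficient `c` (nonzero) on `A^d`. -/
def LoCoeff (y : LaurentPolynomial ℤ) (d c : ℤ) : Prop :=
  coeffA y d = c ∧ c ≠ 0 ∧ ∀ k, k < d → coeffA y k = 0

/-- `y` has highest exponent `d`: `h(y) = d`. -/
def IsHi (y : LaurentPolynomial ℤ) (d : ℤ) : Prop :=
  coeffA y d ≠ 0 ∧ ∀ k, d < k → coeffA y k = 0

/-- `y` has lowest exponent `d`: `ℓ(y) = d`. -/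
def IsLo (y : LaurentPolynomial ℤ) (d : ℤ) : Prop :=
  coeffA y d ≠ 0 ∧ ∀ k, k < d → coeffA y k = 0

/-- P(n) = A^{−n−6} + (A⁴+A⁻⁴)·Σ_{k=1}^{n} (−1)^k A^{4k−n−2} -/
noncomputable def P (n : ℕ) : LaurentPolynomial ℤ :=
  T (-(n:ℤ) - 6) +
    (T 4 + T (-4)) * ∑ k ∈ Finset.Icc 1 n, (-1 : LaurentPolynomial ℤ)^k * T (4*(k:ℤ) - n - 2)

/-- P̄(n) = A^{n+6} + (A⁴+A⁻⁴)·Σ_{k=1}^{n} (−1)^k A^{−4k+n+2} -/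
noncomputable def Pbar (n : ℕ) : LaurentPolynomial ℤ :=
  T ((n:ℤ) + 6) +
    (T 4 + T (-4)) * ∑ k ∈ Finset.Icc 1 n, (-1 : LaurentPolynomial ℤ)^k * T (-4*(k:ℤ) + n + 2)

/-- Q(j) = −A^{2−j} + Σ_{k=0}^{j} (−1)^{k+1} A^{4k−j−2} -/
noncomputable def Q (j : ℕ) : LaurentPolynomial ℤ :=
  -T (2 - (j:ℤ)) + ∑ k ∈ Finset.range (j+1), (-1 : LaurentPolynomial ℤ)^(k+1) * T (4*(k:ℤ) - j - 2)

/-- N(j) = (−A⁶−A⁻⁶)·(−A³)^j + (−A⁴−A⁻⁴+2)·Q(j) -/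
noncomputable def N (j : ℕ) : LaurentPolynomial ℤ :=
  (-T 6 - T (-6)) * (-T 3)^j + (-T 4 - T (-4) + 2) * Q j

/-- R(m) = A^{−m−5} + (A⁴+A⁻⁴)·Σ_{k=1}^{m−1} (−1)^k A^{4k−m−1} -/
noncomputable def Rm (m : ℕ) : LaurentPolynomial ℤ :=
  T (-(m:ℤ) - 5) +
    (T 4 + T (-4)) * ∑ k ∈ Finset.Icc 1 (m-1), (-1 : LaurentPolynomial ℤ)^k * T (4*(k:ℤ) - m - 1)

/-! The first summand of `N j` is `±(A^{3j+6} + A^{3j-6})`. The second, `(-A⁴-A⁻⁴+2)·Q j`,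
lives in degrees `[-j-6, 3j+2]`, since `Q j` lives in `[-j-2, 3j-2]` (for `j ≥ 1`) with lowest term
`-A^{-j-2}`. Hence the top term of `N j` comes from the first summand alone and the bottom term
from the second alone, as soon as `j ≥ 1` puts `3j-6` above `-j-6`. -/

section LaurentCoeff

variable {R : Type*}

lemma coeff_T_mul [Semiring R] (n k : ℤ) (f : R[T;T⁻¹]) :
    (T n * f).coeff k = f.coeff (k - n) := by
  rw [T, AddMonoidAlgebra.coeff_single_mul_apply, one_mul, neg_add_eq_sub]

lemma coeff_C_mul [Semiring R] (r : R) (k : ℤ) (f : R[T;T⁻¹]) :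
    (C r * f).coeff k = r * f.coeff k := by
  rw [← single_eq_C, AddMonoidAlgebra.coeff_single_mul_apply, neg_zero, zero_add]

lemma neg_one_pow_eq_C [Ring R] (m : ℕ) : (-1 : R[T;T⁻¹]) ^ m = C ((-1) ^ m) := by
  rw [map_pow, map_neg, map_one]

end LaurentCoeff

lemma coeffA_add (f g : LaurentPolynomial ℤ) (k : ℤ) :
    coeffA (f + g) k = coeffA f k + coeffA g k := rfl

section CoeffA

variable {f g : LaurentPolynomial ℤ} {d c : ℤ}

lemma HiCoeff.add (hf : HiCoeff f d c) (hg : ∀ k, d ≤ k → coeffA g k = 0) :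
    HiCoeff (f + g) d c := by
  obtain ⟨hd, hc, hvan⟩ := hf
  have hsum : ∀ k, d ≤ k → coeffA (f + g) k = coeffA f k := fun k hk => by
    rw [coeffA_add, hg k hk, add_zero]
  exact ⟨(hsum d le_rfl).trans hd, hc, fun k hk => (hsum k hk.le).trans (hvan k hk)⟩

lemma LoCoeff.add_left (hg : LoCoeff g d c) (hf : ∀ k, k ≤ d → coeffA f k = 0) :
    LoCoeff (f + g) d c := by
  obtain ⟨hd, hc, hvan⟩ := hg
  have hsum : ∀ k, k ≤ d → coeffA (f + g) k = coeffA g k := fun k hk => by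
    rw [coeffA_add, hf k hk, zero_add]
  exact ⟨(hsum d le_rfl).trans hd, hc, fun k hk => (hsum k hk.le).trans (hvan k hk)⟩

end CoeffA

lemma coeffA_Q (j : ℕ) (k : ℤ) : coeffA (Q j) k =
    -(if 2 - (j:ℤ) = k then 1 else 0) +
      ∑ i ∈ range (j + 1), (-1) ^ (i + 1) * if 4 * (i:ℤ) - j - 2 = k then 1 else 0 := by
  simp only [coeffA, Q, AddMonoidAlgebra.coeff_add, Finsupp.add_apply, AddMonoidAlgebra.coeff_neg,
    Finsupp.neg_apply, AddMonoidAlgebra.coeff_sum, Finset.sum_apply', neg_one_pow_eq_C,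
    coeff_C_mul, T_apply]

lemma coeffA_Q_of_lt {j : ℕ} {k : ℤ} (hk : k < -(j:ℤ) - 2) : coeffA (Q j) k = 0 := by
  rw [coeffA_Q, if_neg (by omega), neg_zero, zero_add]
  exact sum_eq_zero fun i _ => by rw [if_neg (by omega), mul_zero]

lemma coeffA_Q_of_gt {j : ℕ} (hj : 1 ≤ j) {k : ℤ} (hk : 3 * (j:ℤ) - 2 < k) :
    coeffA (Q j) k = 0 := by
  rw [coeffA_Q, if_neg (by omega), neg_zero, zero_add]
  refine sum_eq_zero fun i hi => ?_
  have : i ≤ j := Nat.lt_succ_iff.mp (mem_range.mp hi)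
  rw [if_neg (by omega), mul_zero]

lemma loCoeff_Q (j : ℕ) : LoCoeff (Q j) (-(j:ℤ) - 2) (-1) := by
  refine ⟨?_, by norm_num, fun k hk => coeffA_Q_of_lt hk⟩
  rw [coeffA_Q, if_neg (by omega), neg_zero, zero_add,
    sum_eq_single_of_mem 0 (mem_range.mpr j.succ_pos), if_pos (by simp)]
  · norm_num
  · intro i _ hi
    rw [if_neg (by omega), mul_zero]

lemma coeffA_neg_T_four_sub_T_neg_four_add_two_mul (f : LaurentPolynomial ℤ) (k : ℤ) :
    coeffA ((-T 4 - T (-4) + 2) * f) k = 2 * coeffA f k - coeffA f (k - 4) - coeffA f (k + 4) := by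
  simp only [coeffA, add_mul, sub_mul, neg_mul, AddMonoidAlgebra.coeff_add, Finsupp.add_apply,
    AddMonoidAlgebra.coeff_sub, Finsupp.sub_apply, AddMonoidAlgebra.coeff_neg, Finsupp.neg_apply,
    coeff_T_mul, ← map_ofNat (C : ℤ →+* ℤ[T;T⁻¹]) 2, coeff_C_mul, sub_neg_eq_add]
  ring

lemma coeffA_neg_T_four_sub_T_neg_four_add_two_mul_of_gt {f : LaurentPolynomial ℤ} {b : ℤ}
    (hf : ∀ k, b < k → coeffA f k = 0) {k : ℤ} (hk : b + 4 < k) :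
    coeffA ((-T 4 - T (-4) + 2) * f) k = 0 := by
  rw [coeffA_neg_T_four_sub_T_neg_four_add_two_mul, hf k (by omega), hf (k - 4) (by omega),
    hf (k + 4) (by omega)]
  norm_num

lemma LoCoeff.neg_T_four_sub_T_neg_four_add_two_mul {f : LaurentPolynomial ℤ} {d c : ℤ}
    (hf : LoCoeff f d c) :
    LoCoeff ((-T 4 - T (-4) + 2) * f) (d - 4) (-c) := by
  obtain ⟨hd, hc, hvan⟩ := hf
  refine ⟨?_, neg_ne_zero.mpr hc, fun k hk => ?_⟩
  · rw [coeffA_neg_T_four_sub_T_neg_four_add_two_mul, hvan _ (by omega), hvan _ (by omega),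
      sub_add_cancel, hd]
    ring
  · rw [coeffA_neg_T_four_sub_T_neg_four_add_two_mul, hvan _ (by omega), hvan _ (by omega),
      hvan _ (by omega)]
    norm_num

lemma neg_T_six_sub_T_neg_six_mul_neg_T_three_pow (j : ℕ) :
    (-T 6 - T (-6)) * (-T 3) ^ j =
      C ((-1) ^ (j + 1)) * (T (3 * (j:ℤ) + 6) + T (3 * (j:ℤ) - 6) : LaurentPolynomial ℤ) := by
  rw [neg_pow, T_pow, neg_one_pow_eq_C, pow_succ, map_mul, show 3 * (j:ℤ) + 6 = j * 3 + 6 by ring,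
    show 3 * (j:ℤ) - 6 = j * 3 + -6 by ring, T_add, T_add, map_neg, map_one]
  ring

lemma coeffA_neg_T_six_sub_T_neg_six_mul_neg_T_three_pow (j : ℕ) (k : ℤ) :
    coeffA ((-T 6 - T (-6)) * (-T 3) ^ j) k = (-1) ^ (j + 1) *
      ((if 3 * (j:ℤ) + 6 = k then 1 else 0) + if 3 * (j:ℤ) - 6 = k then 1 else 0) := by
  rw [neg_T_six_sub_T_neg_six_mul_neg_T_three_pow, coeffA, coeff_C_mul, AddMonoidAlgebra.coeff_add,
    Finsupp.add_apply, T_apply, T_apply]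

lemma hiCoeff_neg_T_six_sub_T_neg_six_mul_neg_T_three_pow (j : ℕ) :
    HiCoeff ((-T 6 - T (-6)) * (-T 3) ^ j) (3 * (j:ℤ) + 6) ((-1) ^ (j + 1)) := by
  refine ⟨?_, pow_ne_zero _ (by norm_num), fun k hk => ?_⟩
  · rw [coeffA_neg_T_six_sub_T_neg_six_mul_neg_T_three_pow, if_pos rfl, if_neg (by omega)]
    ring
  · rw [coeffA_neg_T_six_sub_T_neg_six_mul_neg_T_three_pow, if_neg (by omega), if_neg (by omega)]
    ring

lemma coeffA_neg_T_six_sub_T_neg_six_mul_neg_T_three_pow_of_le {j : ℕ} (hj : 1 ≤ j) {k : ℤ}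
    (hk : k ≤ -(j:ℤ) - 6) : coeffA ((-T 6 - T (-6)) * (-T 3) ^ j) k = 0 := by
  rw [coeffA_neg_T_six_sub_T_neg_six_mul_neg_T_three_pow, if_neg (by omega), if_neg (by omega)]
  ring

/-- N(j) has h = 3j+6 with coefficient (−1)^{j+1}, and ℓ = −j−6 with coefficient 1. -/
theorem stmt_3 (j : ℕ) (hj : 1 ≤ j) :
    HiCoeff (N j) (3*(j:ℤ) + 6) ((-1)^(j+1)) ∧
    LoCoeff (N j) (-(j:ℤ) - 6) 1 := by
  have hQ_top : ∀ k, 3 * (j:ℤ) - 2 < k → coeffA (Q j) k = 0 := fun _ => coeffA_Q_of_gt hj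
  have hQ_bot := (loCoeff_Q j).neg_T_four_sub_T_neg_four_add_two_mul
  rw [neg_neg, show -(j:ℤ) - 2 - 4 = -(j:ℤ) - 6 by ring] at hQ_bot
  exact ⟨(hiCoeff_neg_T_six_sub_T_neg_six_mul_neg_T_three_pow j).add fun k hk =>
      coeffA_neg_T_four_sub_T_neg_four_add_two_mul_of_gt hQ_top (by omega),
    hQ_bot.add_left fun k hk => coeffA_neg_T_six_sub_T_neg_six_mul_neg_T_three_pow_of_le hj hk⟩
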